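/- Let M_n and L_n be the maximum and its multiplicity of n i.i.d. geometric(θ) variables. Then L_n / n → 0 almost surely as n → ∞. -/

import Mathlib

open MeasureTheory ProbabilityTheory Filter Finset Topology Function

/-!
Once the running maximum exceeds `K`, every index attaining it has `ξ a > K`, so `L n / n` is at
most the empirical frequency of `{ξ > K}`, which by the strong law tends to
`P (ξ > K) = (1 - θ) ^ K`. Since this limit is positive, some `ξ a` exceeds `K`, so the bound
eventually applies; letting `K → ∞` gives the claim.
-/

theorem card_filter_eq_sup_le_card_filter_lt {x : ℕ → ℕ} {K n a : ℕ} (ha : a < n)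
    (hK : K < x a) :
    #{b ∈ range n | x b = (range n).sup x} ≤ #{b ∈ range n | K < x b} := by
  have hsup : x a ≤ (range n).sup x := le_sup (mem_range.2 ha)
  exact card_le_card <| monotone_filter_right _ fun b hb => by omega

theorem tendsto_card_filter_eq_sup_div_zero {x : ℕ → ℕ} {p : ℕ → ℝ} (hp0 : ∀ K, p K ≠ 0)
    (hp : Tendsto p atTop (𝓝 0))
    (hfreq : ∀ K, Tendsto (fun n : ℕ => (#{a ∈ range n | K < x a} : ℝ) / n) atTop (𝓝 (p K))) :
    Tendsto (fun n : ℕ => (#{a ∈ range n | x a = (range n).sup x} : ℝ) / n) atTop (𝓝 0) := by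
  refine tendsto_order.2 ⟨fun ε hε => Eventually.of_forall fun n => hε.trans_le (by positivity),
    fun ε hε => ?_⟩
  obtain ⟨K, hK⟩ := (hp.eventually (gt_mem_nhds hε)).exists
  -- If no term exceeded `K`, the frequencies of exceedances would all vanish, forcing `p K = 0`.
  obtain ⟨a, ha⟩ : ∃ a, K < x a := by
    by_contra! hnone
    refine hp0 K (tendsto_nhds_unique (hfreq K) ?_)
    simp [filter_false_of_mem fun a _ => (hnone a).not_gt]
  filter_upwards [(hfreq K).eventually (gt_mem_nhds hK), eventually_gt_atTop a] with n hn han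
  refine lt_of_le_of_lt (div_le_div_of_nonneg_right ?_ n.cast_nonneg) hn
  exact_mod_cast card_filter_eq_sup_le_card_filter_lt han ha

theorem ae_tendsto_card_filter_mem_div {Ω α : Type*} [MeasurableSpace Ω] [MeasurableSpace α]
    {P : Measure Ω} [IsFiniteMeasure P] {ξ : ℕ → Ω → α}
    (hindep : Pairwise ((· ⟂ᵢ[P] ·) on ξ)) (hident : ∀ i, IdentDistrib (ξ i) (ξ 0) P P)
    {s : Set α} [DecidablePred (· ∈ s)] (hs : MeasurableSet s) :
    ∀ᵐ ω ∂P, Tendsto (fun n : ℕ => (#{a ∈ range n | ξ a ω ∈ s} : ℝ) / n) atTop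
      (𝓝 (P.real (ξ 0 ⁻¹' s))) := by
  set f : α → ℝ := s.indicator 1
  have hf : Measurable f := measurable_one.indicator hs
  have hξ0 : AEMeasurable (ξ 0) P := (hident 0).aemeasurable_fst
  have hmean : P[f ∘ ξ 0] = P.real (ξ 0 ⁻¹' s) := by
    rw [comp_def, ← integral_map hξ0 hf.aestronglyMeasurable, integral_indicator_one hs,
      measureReal_def, Measure.map_apply_of_aemeasurable hξ0 hs, measureReal_def]
  have hint : Integrable (f ∘ ξ 0) P :=
    (integrable_const (1 : ℝ)).mono' (hf.comp_aemeasurable hξ0).aestronglyMeasurable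
      (Eventually.of_forall fun ω => (norm_indicator_le_norm_self _ _).trans (by simp))
  filter_upwards [strong_law_ae_real (fun i => f ∘ ξ i) hint
    (fun i j hij => (hindep hij).comp hf hf) (fun i => (hident i).comp hf)] with ω hω
  rw [← hmean]
  convert hω using 3 with n
  simp [f, Set.indicator_apply, sum_boole]

section Geometric

variable {Ω : Type*} [MeasurableSpace Ω] {P : Measure Ω} {θ : ℝ}

theorem measure_lt_of_geometric {X : Ω → ℕ} (hX : Measurable X) (hθ0 : 0 < θ) (hθ1 : θ ≤ 1)
    (hgeom : ∀ i : ℕ, P {ω | X ω = i + 1} = ENNReal.ofReal (θ * (1 - θ) ^ i)) (K : ℕ) :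
    P {ω | K < X ω} = ENNReal.ofReal ((1 - θ) ^ K) := by
  have hq0 : 0 ≤ 1 - θ := by linarith
  have hq1 : 1 - θ < 1 := by linarith
  have hunion : {ω | K < X ω} = ⋃ i : ℕ, {ω | X ω = K + i + 1} := by
    ext ω
    simp only [Set.mem_ofPred_eq, Set.mem_iUnion]
    exact ⟨fun h => ⟨X ω - K - 1, by omega⟩, fun ⟨i, hi⟩ => by omega⟩
  have hdisj : Pairwise (Disjoint on fun i : ℕ => {ω | X ω = K + i + 1}) :=
    fun i j hij => Set.disjoint_left.2 fun ω hi hj => hij (by simp_all)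
  have hterm : (fun i : ℕ => θ * (1 - θ) ^ (K + i)) = fun i => θ * (1 - θ) ^ K * (1 - θ) ^ i := by
    ext i; ring
  have hsum : Summable fun i : ℕ => θ * (1 - θ) ^ (K + i) := by
    rw [hterm]; exact (summable_geometric_of_lt_one hq0 hq1).mul_left _
  rw [hunion, measure_iUnion hdisj fun i => hX (measurableSet_singleton _)]
  simp_rw [hgeom]
  rw [← ENNReal.ofReal_tsum_of_nonneg (fun i => by positivity) hsum, hterm, tsum_mul_left,
    tsum_geometric_of_lt_one hq0 hq1, sub_sub_cancel, mul_assoc, mul_left_comm, mul_inv_cancel₀ hθ0.ne', mul_one]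

variable [IsProbabilityMeasure P]

theorem measure_eq_zero_of_geometric {X : Ω → ℕ} (hX : Measurable X) (hθ0 : 0 < θ) (hθ1 : θ ≤ 1)
    (hgeom : ∀ i : ℕ, P {ω | X ω = i + 1} = ENNReal.ofReal (θ * (1 - θ) ^ i)) :
    P {ω | X ω = 0} = 0 := by
  have hcompl : {ω | X ω = 0} = {ω | 0 < X ω}ᶜ := by ext; simp
  rw [hcompl]
  exact (prob_compl_eq_zero_iff (hX measurableSet_Ioi)).2 <|
    (measure_lt_of_geometric hX hθ0 hθ1 hgeom 0).trans (by simp)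

theorem identDistrib_of_geometric {X Y : Ω → ℕ} (hX : Measurable X) (hY : Measurable Y)
    (hθ0 : 0 < θ) (hθ1 : θ ≤ 1)
    (hgeomX : ∀ i : ℕ, P {ω | X ω = i + 1} = ENNReal.ofReal (θ * (1 - θ) ^ i))
    (hgeomY : ∀ i : ℕ, P {ω | Y ω = i + 1} = ENNReal.ofReal (θ * (1 - θ) ^ i)) :
    IdentDistrib X Y P P where
  aemeasurable_fst := hX.aemeasurable
  aemeasurable_snd := hY.aemeasurable
  map_eq := Measure.ext_of_singleton fun k => by
    rw [Measure.map_apply hX (measurableSet_singleton k),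
      Measure.map_apply hY (measurableSet_singleton k)]
    rcases k with _ | i
    · exact (measure_eq_zero_of_geometric hX hθ0 hθ1 hgeomX).trans
        (measure_eq_zero_of_geometric hY hθ0 hθ1 hgeomY).symm
    · exact (hgeomX i).trans (hgeomY i).symm

end Geometric

theorem geometric_multiplicity_div_n_tendsto_zero
    {Ω : Type*} [MeasurableSpace Ω] (P : Measure Ω) [IsProbabilityMeasure P]
    (θ : ℝ) (hθ : θ ∈ Set.Ioo (0:ℝ) 1)
    (ξ : ℕ → Ω → ℕ)
    (hmeas : ∀ a, Measurable (ξ a))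
    (hindep : iIndepFun ξ P)
    (hgeom : ∀ a, ∀ i : ℕ, P {ω | ξ a ω = i + 1} = ENNReal.ofReal (θ * (1 - θ) ^ i))
    (M : ℕ → Ω → ℕ) (hM : ∀ n ω, M n ω = (Finset.range n).sup (fun a => ξ a ω))
    (L : ℕ → Ω → ℕ)
    (hL : ∀ n ω, L n ω = ((Finset.range n).filter (fun a => ξ a ω = M n ω)).card) :
    ∀ᵐ ω ∂P, Tendsto (fun n => (L n ω : ℝ) / n) atTop (nhds 0) := by
  obtain ⟨hθ0, hθ1⟩ := hθ
  have hident (a : ℕ) : IdentDistrib (ξ a) (ξ 0) P P :=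
    identDistrib_of_geometric (hmeas a) (hmeas 0) hθ0 hθ1.le (hgeom a) (hgeom 0)
  have hfreq (K : ℕ) : ∀ᵐ ω ∂P,
      Tendsto (fun n : ℕ => (#{a ∈ range n | K < ξ a ω} : ℝ) / n) atTop (𝓝 ((1 - θ) ^ K)) := by
    have h := ae_tendsto_card_filter_mem_div (fun i j hij => hindep.indepFun hij) hident
      (measurableSet_Ioi (a := K))
    simp only [measureReal_def, Set.preimage, Set.mem_Ioi] at h
    rwa [measure_lt_of_geometric (hmeas 0) hθ0 hθ1.le (hgeom 0),
      ENNReal.toReal_ofReal (pow_nonneg (by linarith) K)] at h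
  filter_upwards [ae_all_iff.2 hfreq] with ω hω
  simp only [hL, hM]
  exact tendsto_card_filter_eq_sup_div_zero (fun K => pow_ne_zero K (by linarith))
    (tendsto_pow_atTop_nhds_zero_of_lt_one (by linarith) (by linarith)) hω
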